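/- arXiv:1405.3039 — 7 statements merged into one kernel-verified Lean document; each statement's English description precedes it below -/
import Mathlib

section
/- Let m ≥ 2 and a ≥ 1 be integers and set n = m^a. Then every feasible catalyst pair (ω, ω') of nonincreasing probability vectors in ℝ^n satisfies d(ω, ω') = (1/2)·∑_{i=1}^n |ω_i − ω'_i| ≥ (m−1)/(1+(m−1)a). -/
/-!
Write `S k` and `S' k` for the sums of the first `k` entries of `ω` and `ω'`. Majorization at
the multiples `q·m` of `m` says `S' (q·m) ≤ S q`, and `S k - S' k ≤ d` for every `k`, where `d`
is the trace distance. Chaining these along the powers of `m` gives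
`1 = S' (m^a) ≤ S 1 + (a-1)·d = ω₁ + (a-1)·d`. Majorization at `k = 1` gives `ω'₁ ≤ ω₁/m`,
so `ω₁·(1 - 1/m) ≤ ω₁ - ω'₁ ≤ d`; eliminating `ω₁` gives the bound.
-/

/-- A pair `(ω, ω')` of vectors in `ℝ^n` is a feasible catalyst pair (for an
`m`-dimensional system with trivial Hamiltonian) if both are probability vectors
with nonincreasing entries, and the vector obtained by repeating each entry
`ω i / m` exactly `m` times majorizes the vector `(ω'_1, …, ω'_n, 0, …, 0)` in
`ℝ^(n·m)`, i.e. every partial sum of the former dominates that of the latter.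
This encodes the thermo-majorization condition `ω ⊗ (I/m) ≻ ω' ⊗ |0⟩⟨0|`. -/
def FeasiblePair (m n : ℕ) (ω ω' : Fin n → ℝ) : Prop :=
  (∀ i, 0 ≤ ω i) ∧ (∀ i, 0 ≤ ω' i) ∧
  (∑ i, ω i = 1) ∧ (∑ i, ω' i = 1) ∧
  (∀ i j : Fin n, i ≤ j → ω j ≤ ω i) ∧
  (∀ i j : Fin n, i ≤ j → ω' j ≤ ω' i) ∧
  (∀ k, k ≤ n * m →
    (∑ l ∈ Finset.range k, if h : l < n then ω' ⟨l, h⟩ else 0) ≤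
    (∑ l ∈ Finset.range k, if h : l / m < n then ω ⟨l / m, h⟩ / m else 0))

open Finset

theorem Finset.sum_range_mul_div {M : Type*} [AddCommMonoid M] (f : ℕ → M) (q m : ℕ) :
    ∑ l ∈ range (q * m), f (l / m) = m • ∑ i ∈ range q, f i := by
  induction q with
  | zero => simp
  | succ q ih =>
    have hdiv : ∀ i ∈ range m, f ((q * m + i) / m) = f q := fun i hi => by
      rw [mem_range] at hi
      rw [Nat.mul_comm, Nat.mul_add_div (by omega), Nat.div_eq_of_lt hi, add_zero]
    rw [Nat.succ_mul, sum_range_add, ih, sum_congr rfl hdiv, sum_range_succ, smul_add,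
      sum_const, card_range]

theorem Finset.sum_sub_sum_le_half_sum_abs_sub {ι : Type*} [Fintype ι] {x y : ι → ℝ}
    (hxy : ∑ i, x i = ∑ i, y i) (s : Finset ι) :
    ∑ i ∈ s, x i - ∑ i ∈ s, y i ≤ (1 / 2) * ∑ i, |x i - y i| := by
  have hpos : ∑ i, (x i - y i)⁺ = (1 / 2) * ∑ i, |x i - y i| := by
    have hsplit : ∀ i, |x i - y i| = 2 * (x i - y i)⁺ - (x i - y i) := fun i => by
      linarith [posPart_add_negPart (x i - y i), posPart_sub_negPart (x i - y i)]
    simp only [hsplit, sum_sub_distrib, ← mul_sum, hxy, sub_self]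
    ring
  rw [← sum_sub_distrib, ← hpos]
  calc ∑ i ∈ s, (x i - y i) ≤ ∑ i ∈ s, (x i - y i)⁺ := sum_le_sum fun i _ => le_posPart _
    _ ≤ ∑ i, (x i - y i)⁺ :=
      sum_le_sum_of_subset_of_nonneg (subset_univ s) fun i _ _ => posPart_nonneg _

def prefixSum {n : ℕ} (v : Fin n → ℝ) (k : ℕ) : ℝ := ∑ i : Fin n with i.val < k, v i

theorem sum_range_dite_eq_prefixSum {n : ℕ} (v : Fin n → ℝ) (k : ℕ) :
    ∑ l ∈ range k, (if h : l < n then v ⟨l, h⟩ else 0) = prefixSum v k := by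
  refine (sum_of_injOn Fin.val Fin.val_injective.injOn ?_ ?_ ?_).symm
  · intro i hi; simpa using hi
  · intro l hl hnot
    rw [dif_neg]
    intro hln
    exact hnot ⟨⟨l, hln⟩, by simpa using hl, rfl⟩
  · intro i _; simp

theorem prefixSum_of_le {n : ℕ} (v : Fin n → ℝ) {k : ℕ} (hk : n ≤ k) :
    prefixSum v k = ∑ i, v i := by
  rw [prefixSum, filter_true_of_mem fun i _ => i.is_lt.trans_le hk]

noncomputable def traceDist {n : ℕ} (ω ω' : Fin n → ℝ) : ℝ := (1 / 2) * ∑ i, |ω i - ω' i|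

namespace FeasiblePair

variable {m n : ℕ} {ω ω' : Fin n → ℝ}

theorem prefixSum_mul_le (h : FeasiblePair m n ω ω') (hm : 0 < m) {q : ℕ} (hq : q ≤ n) :
    prefixSum ω' (q * m) ≤ prefixSum ω q := by
  obtain ⟨-, -, -, -, -, -, hmaj⟩ := h
  specialize hmaj (q * m) (Nat.mul_le_mul_right m hq)
  have hrhs : (∑ l ∈ range (q * m), if h : l / m < n then ω ⟨l / m, h⟩ / m else 0)
      = prefixSum ω q := by
    let g : ℕ → ℝ := fun i => if h : i < n then ω ⟨i, h⟩ else 0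
    calc _ = (∑ l ∈ range (q * m), g (l / m)) / m := by
          rw [sum_div]
          exact sum_congr rfl fun l _ => by rw [dite_div, zero_div]
      _ = prefixSum ω q := by
          rw [sum_range_mul_div, nsmul_eq_mul, mul_div_cancel_left₀ _ (by positivity),
            sum_range_dite_eq_prefixSum]
  rwa [hrhs, sum_range_dite_eq_prefixSum] at hmaj

theorem prefixSum_one_le (h : FeasiblePair m n ω ω') (hm : 0 < m) :
    prefixSum ω' 1 ≤ prefixSum ω 1 / m := by
  rcases Nat.eq_zero_or_pos n with rfl | hn
  · simp [prefixSum]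
  obtain ⟨-, -, -, -, -, -, hmaj⟩ := h
  simpa [← sum_range_dite_eq_prefixSum, hn] using hmaj 1 (Nat.mul_pos hn hm)

theorem prefixSum_sub_le_traceDist (h : FeasiblePair m n ω ω') (k : ℕ) :
    prefixSum ω k - prefixSum ω' k ≤ traceDist ω ω' :=
  sum_sub_sum_le_half_sum_abs_sub (h.2.2.1.trans h.2.2.2.1.symm) _

theorem prefixSum_pow_succ_le (h : FeasiblePair m n ω ω') (hm : 0 < m) {j : ℕ}
    (hj : m ^ j ≤ n) : prefixSum ω' (m ^ (j + 1)) ≤ prefixSum ω 1 + j * traceDist ω ω' := by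
  induction j with
  | zero => simpa using h.prefixSum_mul_le hm (q := 1) hj
  | succ j ih =>
    have hj' : m ^ j ≤ n := (Nat.pow_le_pow_right hm j.le_succ).trans hj
    calc prefixSum ω' (m ^ (j + 1 + 1)) ≤ prefixSum ω (m ^ (j + 1)) := by
          rw [pow_succ _ (j + 1)]; exact h.prefixSum_mul_le hm hj
      _ ≤ prefixSum ω' (m ^ (j + 1)) + traceDist ω ω' := by
          linarith [h.prefixSum_sub_le_traceDist (m ^ (j + 1))]
      _ ≤ prefixSum ω 1 + (j + 1 : ℕ) * traceDist ω ω' := by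
          push_cast; linarith [ih hj']

end FeasiblePair

/-- For `m ≥ 2`, `a ≥ 1` and `n = m^a`, every feasible catalyst pair `(ω, ω')`
of nonincreasing probability vectors in `ℝ^n` has trace distance
`(1/2)·∑ |ω i − ω' i| ≥ (m−1)/(1+(m−1)a)`. -/
theorem catalyst_trace_dist_lower_bound (m a n : ℕ) (hm : 2 ≤ m) (ha : 1 ≤ a)
    (hn : n = m ^ a) (ω ω' : Fin n → ℝ) (h : FeasiblePair m n ω ω') :
    ((m : ℝ) - 1) / (1 + ((m : ℝ) - 1) * a) ≤ (1 / 2) * ∑ i, |ω i - ω' i| := by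
  change _ ≤ traceDist ω ω'
  have hm0 : 0 < m := by omega
  obtain ⟨b, rfl⟩ : ∃ b, a = b + 1 := ⟨a - 1, by omega⟩
  have hchain : 1 ≤ prefixSum ω 1 + b * traceDist ω ω' := by
    have := h.prefixSum_pow_succ_le hm0 (j := b) (hn ▸ Nat.pow_le_pow_right hm0 b.le_succ)
    rwa [← hn, prefixSum_of_le ω' le_rfl, h.2.2.2.1] at this
  have hfirst := h.prefixSum_one_le hm0
  have hdist := h.prefixSum_sub_le_traceDist 1
  have hM : (2 : ℝ) ≤ m := by exact_mod_cast hm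
  rw [le_div_iff₀ (by positivity)] at hfirst
  rw [div_le_iff₀ (by nlinarith)]
  push_cast
  nlinarith [mul_le_mul_of_nonneg_left hchain (by linarith : (0 : ℝ) ≤ m - 1)]
end

section
/- Let m ≥ 2 and a ≥ 1 be integers and set n = m^a. Define ω'_1 = 1/(1+(m−1)a) and, for 2 ≤ i ≤ n, ω'_i = ω'_1·m^{1−j} where j is the unique integer with m^{j−1} < i ≤ m^j (i.e., j = ⌈log_m i⌉). Define ω_1 = m·ω'_1, ω_i = ω'_i for 2 ≤ i ≤ n/m, and ω_i = 0 for i > n/m. Then ω and ω' are probability vectors with nonincreasing entries, (ω, ω') is a feasible catalyst pair, and d(ω, ω') = (1/2)·∑_{i=1}^n |ω_i − ω'_i| = (m−1)/(1+(m−1)a). -/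
open Finset

theorem Finset.sum_range_mul_comp_div {M : Type*} [AddCommMonoid M] (f : ℕ → M) (m K : ℕ) :
    ∑ l ∈ range (K * m), f (l / m) = m • ∑ i ∈ range K, f i := by
  rcases Nat.eq_zero_or_pos m with rfl | hm
  · simp
  induction K with
  | zero => simp
  | succ K ih =>
    have hblock : ∀ t ∈ range m, f ((K * m + t) / m) = f K := fun t ht => by
      rw [Nat.add_comm, Nat.add_mul_div_right _ _ hm, Nat.div_eq_of_lt (mem_range.1 ht),
        Nat.zero_add]
    rw [Nat.succ_mul, sum_range_add, ih, sum_congr rfl hblock, sum_const, card_range,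
      sum_range_succ, smul_add]

theorem Nat.clog_succ_eq_clog_div_succ_add_one {b l : ℕ} (hb : 1 < b) (hl : l ≠ 0) :
    Nat.clog b (l + 1) = Nat.clog b (l / b + 1) + 1 := by
  rw [Nat.clog_of_two_le hb (by omega), show l + 1 + b - 1 = l + 1 * b by omega,
    Nat.add_mul_div_right _ _ (by omega)]

theorem Finset.sum_abs_sub_eq_two_mul_sum_posPart {ι : Type*} (s : Finset ι) {x y : ι → ℝ}
    (hxy : ∑ i ∈ s, x i = ∑ i ∈ s, y i) :
    ∑ i ∈ s, |x i - y i| = 2 * ∑ i ∈ s, (x i - y i)⁺ := by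
  have hsum : ∑ i ∈ s, (|x i - y i| + (x i - y i)) = ∑ i ∈ s, 2 • (x i - y i)⁺ :=
    sum_congr rfl fun i _ => abs_add_eq_two_nsmul_posPart _
  rw [sum_add_distrib, sum_sub_distrib, hxy, sub_self, add_zero] at hsum
  rw [hsum, ← smul_sum, two_nsmul, two_mul]

section Catalyst

variable {m K N n : ℕ} {c : ℝ}

/-- The paper's `ω'` with `ω'_1 = c`, in 0-based indexing and extended to all of `ℕ`. -/
noncomputable def catalystFinal (m : ℕ) (c : ℝ) (i : ℕ) : ℝ :=
  if i = 0 then c else c * (m : ℝ) ^ ((1 : ℤ) - Nat.clog m (i + 1))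

/-- The paper's `ω` with `ω_1 = m c`, supported on the first `K = n / m` indices. -/
noncomputable def catalystInitial (m : ℕ) (c : ℝ) (K i : ℕ) : ℝ :=
  if i = 0 then m * c else if i < K then catalystFinal m c i else 0

theorem catalystFinal_zero : catalystFinal m c 0 = c := if_pos rfl

theorem catalystInitial_zero : catalystInitial m c K 0 = m * c := if_pos rfl

theorem catalystFinal_of_ne_zero (hm : 1 < m) {l : ℕ} (hl : l ≠ 0) :
    catalystFinal m c l = c * (m : ℝ) ^ (-(Nat.clog m (l / m + 1) : ℤ)) := by
  rw [catalystFinal, if_neg hl, Nat.clog_succ_eq_clog_div_succ_add_one hm hl]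
  push_cast
  ring_nf

theorem catalystFinal_eq_catalystInitial_div (hm : 1 < m) {l : ℕ} (hl : l < K * m) :
    catalystFinal m c l = catalystInitial m c K (l / m) / m := by
  have hm0 : (m : ℝ) ≠ 0 := by positivity
  rcases Nat.eq_zero_or_pos l with rfl | hl0
  · rw [Nat.zero_div, catalystFinal_zero, catalystInitial_zero]
    field_simp
  rw [catalystFinal_of_ne_zero hm hl0.ne', catalystInitial]
  rcases Nat.eq_zero_or_pos (l / m) with hq | hq
  · rw [hq, if_pos rfl]
    simp [hm0]
  · rw [if_neg hq.ne', if_pos ((Nat.div_lt_iff_lt_mul (by omega)).2 hl), catalystFinal,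
      if_neg hq.ne', zpow_sub₀ hm0, zpow_neg, zpow_one]
    field_simp

theorem catalystFinal_nonneg (hc : 0 ≤ c) (i : ℕ) : 0 ≤ catalystFinal m c i := by
  unfold catalystFinal; split <;> positivity

theorem catalystInitial_nonneg (hc : 0 ≤ c) (K i : ℕ) : 0 ≤ catalystInitial m c K i := by
  unfold catalystInitial; split
  · positivity
  · split
    · exact catalystFinal_nonneg hc i
    · exact le_rfl

theorem catalystInitial_le_catalystFinal (hc : 0 ≤ c) {i : ℕ} (hi : i ≠ 0) :
    catalystInitial m c K i ≤ catalystFinal m c i := by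
  rw [catalystInitial, if_neg hi]
  split
  · exact le_rfl
  · exact catalystFinal_nonneg hc i

theorem catalystFinal_antitone (hm : 1 < m) (hc : 0 ≤ c) : Antitone (catalystFinal m c) := by
  have hm1 : (1 : ℝ) ≤ m := by exact_mod_cast hm.le
  intro i j hij
  rcases Nat.eq_zero_or_pos j with rfl | hj
  · rw [Nat.le_zero.1 hij]
  rw [catalystFinal, if_neg hj.ne']
  have hclog : 0 < Nat.clog m (j + 1) := Nat.clog_pos hm (by omega)
  rcases Nat.eq_zero_or_pos i with rfl | hi
  · rw [catalystFinal_zero]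
    exact mul_le_of_le_one_right hc (zpow_le_one_of_nonpos₀ hm1 (by omega))
  · rw [catalystFinal, if_neg hi.ne']
    have hmono := Nat.clog_mono_right m (show i + 1 ≤ j + 1 by omega)
    exact mul_le_mul_of_nonneg_left (zpow_le_zpow_right₀ hm1 (by omega)) hc

theorem catalystInitial_antitone (hm : 1 < m) (hc : 0 ≤ c) (K : ℕ) :
    Antitone (catalystInitial m c K) := by
  have hfinal := catalystFinal_antitone hm hc
  intro i j hij
  rcases Nat.eq_zero_or_pos i with rfl | hi
  · rcases Nat.eq_zero_or_pos j with rfl | hj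
    · exact le_rfl
    calc catalystInitial m c K j ≤ catalystFinal m c j :=
          catalystInitial_le_catalystFinal hc hj.ne'
      _ ≤ catalystFinal m c 0 := hfinal (Nat.zero_le j)
      _ ≤ catalystInitial m c K 0 := by
        rw [catalystFinal_zero, catalystInitial_zero]
        exact le_mul_of_one_le_left hc (by exact_mod_cast hm.le)
  · rw [catalystInitial, catalystInitial, if_neg hi.ne', if_neg (by omega)]
    split_ifs with hjK hiK
    · exact hfinal hij
    · omega
    · exact catalystFinal_nonneg hc i
    · exact le_rfl

theorem sum_range_catalystInitial_self (hK : K ≠ 0) :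
    ∑ i ∈ range K, catalystInitial m c K i =
      ∑ i ∈ range K, catalystFinal m c i + (m - 1) * c := by
  obtain ⟨K, rfl⟩ := Nat.exists_eq_succ_of_ne_zero hK
  have hmid : ∀ i ∈ range K, catalystInitial m c (K + 1) (i + 1) = catalystFinal m c (i + 1) :=
    fun i hi => by rw [catalystInitial, if_neg i.succ_ne_zero, if_pos (by simpa using hi)]
  rw [sum_range_succ', sum_range_succ', sum_congr rfl hmid, catalystInitial_zero,
    catalystFinal_zero]
  ring

theorem sum_range_mul_catalystFinal_eq_sum_catalystInitial (hm : 1 < m) (K : ℕ) :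
    ∑ l ∈ range (K * m), catalystFinal m c l = ∑ i ∈ range K, catalystInitial m c K i := by
  have hm0 : (m : ℝ) ≠ 0 := by positivity
  rw [sum_congr rfl fun l hl => catalystFinal_eq_catalystInitial_div hm (mem_range.1 hl),
    sum_range_mul_comp_div (fun i => catalystInitial m c K i / m), ← sum_div, nsmul_eq_mul,
    mul_div_cancel₀ _ hm0]

theorem sum_range_pow_catalystFinal (hm : 1 < m) (a : ℕ) :
    ∑ i ∈ range (m ^ a), catalystFinal m c i = c * (1 + (m - 1) * a) := by
  induction a with
  | zero => simp [catalystFinal_zero]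
  | succ a ih =>
    rw [pow_succ, sum_range_mul_catalystFinal_eq_sum_catalystInitial hm,
      sum_range_catalystInitial_self (by positivity), ih]
    push_cast
    ring

theorem sum_range_catalystInitial_of_le (hK : K ≠ 0) (hKN : K ≤ N) :
    ∑ i ∈ range N, catalystInitial m c K i = ∑ i ∈ range K, catalystInitial m c K i := by
  refine (sum_subset (range_subset_range.2 hKN) fun i _ hi => ?_).symm
  have hi : K ≤ i := by simpa using hi
  rw [catalystInitial, if_neg (by omega), if_neg (by omega)]

theorem sum_catalystInitial_eq_one (hm : 1 < m) (hK : K ≠ 0) (hKn : K * m = n)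
    (hsum : ∑ i ∈ range n, catalystFinal m c i = 1) :
    ∑ i : Fin n, catalystInitial m c K i = 1 := by
  rw [Fin.sum_univ_eq_sum_range (catalystInitial m c K),
    sum_range_catalystInitial_of_le hK (hKn ▸ Nat.le_mul_of_pos_right K (by omega)),
    ← sum_range_mul_catalystFinal_eq_sum_catalystInitial hm, hKn, hsum]

theorem catalystFinal_ite_eq_catalystInitial_div_ite (hm : 1 < m) (hK : K ≠ 0)
    (hKn : K * m = n) (l : ℕ) :
    (if l < n then catalystFinal m c l else 0) =
      if l / m < n then catalystInitial m c K (l / m) / m else 0 := by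
  have hm0 : 0 < m := by omega
  by_cases hl : l < n
  · rw [if_pos hl, if_pos ((Nat.div_le_self l m).trans_lt hl),
      catalystFinal_eq_catalystInitial_div hm (hKn ▸ hl)]
  · have hKl : K ≤ l / m := (Nat.le_div_iff_mul_le hm0).2 (by omega)
    rw [if_neg hl, catalystInitial, if_neg (show l / m ≠ 0 by omega),
      if_neg (show ¬l / m < K by omega), zero_div, ite_self]

theorem feasiblePair_catalyst (hm : 1 < m) (hc : 0 ≤ c) (hK : K ≠ 0) (hKn : K * m = n)
    (hsum : ∑ i ∈ range n, catalystFinal m c i = 1) :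
    FeasiblePair m n (fun i => catalystInitial m c K i) (fun i => catalystFinal m c i) := by
  refine ⟨fun i => catalystInitial_nonneg hc K i, fun i => catalystFinal_nonneg hc i,
    sum_catalystInitial_eq_one hm hK hKn hsum, ?_,
    fun i j hij => catalystInitial_antitone hm hc K hij,
    fun i j hij => catalystFinal_antitone hm hc hij,
    fun k _ => le_of_eq (sum_congr rfl fun l _ => ?_)⟩
  · rwa [Fin.sum_univ_eq_sum_range (catalystFinal m c)]
  · exact catalystFinal_ite_eq_catalystInitial_div_ite hm hK hKn l

theorem sum_abs_catalystInitial_sub_catalystFinal (hm : 1 < m) (hc : 0 ≤ c) (hK : K ≠ 0)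
    (hKn : K * m = n) (hsum : ∑ i ∈ range n, catalystFinal m c i = 1) :
    ∑ i : Fin n, |catalystInitial m c K i - catalystFinal m c i| = 2 * ((m - 1) * c) := by
  have hn : 0 < n := hKn ▸ Nat.mul_pos (Nat.pos_of_ne_zero hK) (by omega)
  have hm1 : (1 : ℝ) ≤ m := by exact_mod_cast hm.le
  rw [sum_abs_sub_eq_two_mul_sum_posPart, sum_eq_single ⟨0, hn⟩]
  · simp only [catalystInitial_zero, catalystFinal_zero]
    rw [posPart_eq_self.2 (by nlinarith)]
    ring
  · intro i _ hi
    exact posPart_eq_zero.2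
      (sub_nonpos.2 (catalystInitial_le_catalystFinal hc (Fin.val_ne_iff.2 hi)))
  · simp
  · rw [sum_catalystInitial_eq_one hm hK hKn hsum,
      Fin.sum_univ_eq_sum_range (catalystFinal m c), hsum]

end Catalyst

/-- The explicit catalyst construction: for `n = m^a`, set
`ω'_1 = 1/(1+(m−1)a)` and `ω'_i = ω'_1 · m^{1−⌈log_m i⌉}` for `2 ≤ i ≤ n`
(in 1-based indexing; `Fin n` index `i` corresponds to paper index `i.val + 1`,
and `⌈log_m i⌉ = Nat.clog m i`), with `ω_1 = m·ω'_1`, `ω_i = ω'_i` for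
`2 ≤ i ≤ n/m`, and `ω_i = 0` for `i > n/m`. Then `(ω, ω')` is a feasible
catalyst pair with trace distance exactly `(m−1)/(1+(m−1)a)`. -/
theorem catalyst_construction_optimal (m a n : ℕ) (hm : 2 ≤ m) (ha : 1 ≤ a)
    (hn : n = m ^ a) (h0 : 0 < n) (ω ω' : Fin n → ℝ)
    (hω'1 : ω' ⟨0, h0⟩ = 1 / (1 + ((m : ℝ) - 1) * a))
    (hω' : ∀ i : Fin n, 2 ≤ i.val + 1 →
      ω' i = (1 / (1 + ((m : ℝ) - 1) * a)) *
        (m : ℝ) ^ ((1 : ℤ) - (Nat.clog m (i.val + 1) : ℤ)))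
    (hω1 : ω ⟨0, h0⟩ = (m : ℝ) * (1 / (1 + ((m : ℝ) - 1) * a)))
    (hωmid : ∀ i : Fin n, 2 ≤ i.val + 1 → i.val + 1 ≤ n / m → ω i = ω' i)
    (hωtail : ∀ i : Fin n, n / m < i.val + 1 → ω i = 0) :
    FeasiblePair m n ω ω' ∧
      (1 / 2) * ∑ i, |ω i - ω' i| = ((m : ℝ) - 1) / (1 + ((m : ℝ) - 1) * a) := by
  have hD : 0 < 1 + ((m : ℝ) - 1) * a := by
    have : (1 : ℝ) ≤ m := by exact_mod_cast (by omega : 1 ≤ m)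
    positivity
  set c := 1 / (1 + ((m : ℝ) - 1) * a) with hc_def
  have hc : 0 ≤ c := by positivity
  have hsum : ∑ i ∈ range n, catalystFinal m c i = 1 := by
    rw [hn, sum_range_pow_catalystFinal hm, hc_def, one_div_mul_cancel hD.ne']
  have hK : n / m ≠ 0 := (Nat.div_pos (hn ▸ Nat.le_self_pow (by omega) m) (by omega)).ne'
  have hKn : n / m * m = n := Nat.div_mul_cancel (hn ▸ dvd_pow_self m (by omega))
  have hω'_eq : ω' = fun i : Fin n => catalystFinal m c i := funext fun i => by
    rcases Nat.eq_zero_or_pos i.val with hi | hi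
    · rw [show i = ⟨0, h0⟩ from Fin.ext hi, hω'1]
      exact catalystFinal_zero.symm
    · rw [hω' i (by omega), catalystFinal, if_neg hi.ne']
  have hω_eq : ω = fun i : Fin n => catalystInitial m c (n / m) i := funext fun i => by
    rw [catalystInitial]
    split_ifs with hi hiK
    · rw [show i = ⟨0, h0⟩ from Fin.ext hi, hω1]
    · rw [hωmid i (by omega) (by omega), hω'_eq]
    · exact hωtail i (by omega)
  subst hω_eq hω'_eq
  refine ⟨feasiblePair_catalyst hm hc hK hKn hsum, ?_⟩
  rw [sum_abs_catalystInitial_sub_catalystFinal hm hc hK hKn hsum, hc_def]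
  ring
end

section
/- Let m ≥ 2 be an integer and take n = m. If (ω, ω') is a feasible catalyst pair of nonincreasing probability vectors in ℝ^m, then necessarily ω_1 = 1 and ω_i = 0 for all i ≥ 2, while ω'_i = 1/m for all 1 ≤ i ≤ m; consequently d(ω, ω') = (1/2)·∑_{i=1}^m |ω_i − ω'_i| = 1 − 1/m. -/
open Finset

section RealVectors

variable {ι : Type*} [Fintype ι] {f : ι → ℝ}

theorem eq_zero_of_sum_eq_one_of_apply_eq_one [DecidableEq ι] (hf : ∀ i, 0 ≤ f i)
    (hsum : ∑ i, f i = 1) {a : ι} (ha : f a = 1) {i : ι} (hi : i ≠ a) : f i = 0 := by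
  have hrest : ∑ j ∈ {a}ᶜ, f j = 0 := by
    linarith [Fintype.sum_eq_add_sum_compl a f]
  exact (sum_eq_zero_iff_of_nonneg fun j _ => hf j).mp hrest i (by simpa using hi)

theorem eq_of_le_of_sum_eq_card_mul {c : ℝ} (hle : ∀ i, f i ≤ c)
    (hsum : ∑ i, f i = Fintype.card ι * c) (i : ι) : f i = c := by
  have hsum' : ∑ i, f i = ∑ _i : ι, c := by simp [hsum]
  exact (sum_eq_sum_iff_of_le fun j _ => hle j).mp hsum' i (mem_univ i)

theorem sum_abs_sub_const_of_eq_one_of_eq_zero [DecidableEq ι] {a : ι} (ha : f a = 1)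
    (hf : ∀ i ≠ a, f i = 0) (c : ℝ) :
    ∑ i, |f i - c| = |1 - c| + (Fintype.card ι - 1) * |c| := by
  have hrest : ∀ i ∈ ({a}ᶜ : Finset ι), |f i - c| = |c| := fun i hi => by
    rw [hf i (by simpa using hi), zero_sub, abs_neg]
  rw [Fintype.sum_eq_add_sum_compl a, ha, sum_congr rfl hrest, sum_const, card_compl,
    card_singleton, nsmul_eq_mul, Nat.cast_sub (Fintype.card_pos_iff.mpr ⟨a⟩), Nat.cast_one]

end RealVectors

theorem sum_range_dilation_of_le {m n k : ℕ} (ω : Fin n → ℝ) (hn : 0 < n) (hk : k ≤ m) :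
    (∑ l ∈ range k, if h : l / m < n then ω ⟨l / m, h⟩ / m else 0) = k * ω ⟨0, hn⟩ / m := by
  have hconst : ∀ l ∈ range k, (if h : l / m < n then ω ⟨l / m, h⟩ / m else 0) =
      ω ⟨0, hn⟩ / m := fun l hl => by
    simp only [Nat.div_eq_of_lt ((mem_range.mp hl).trans_le hk), dif_pos hn]
  rw [sum_congr rfl hconst, sum_const, card_range, nsmul_eq_mul, mul_div_assoc]

namespace FeasiblePair

variable {m n : ℕ} {ω ω' : Fin n → ℝ}

theorem head_le_head_div (h : FeasiblePair m n ω ω') (hm : 0 < m) (hn : 0 < n) :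
    ω' ⟨0, hn⟩ ≤ ω ⟨0, hn⟩ / m := by
  have hmaj := h.2.2.2.2.2.2 1 (Nat.mul_pos hn hm)
  rwa [sum_range_dilation_of_le ω hn hm, sum_range_one, dif_pos hn, Nat.cast_one,
    one_mul] at hmaj

theorem one_le_head {ω ω' : Fin m → ℝ} (h : FeasiblePair m m ω ω') (hm : 0 < m) :
    1 ≤ ω ⟨0, hm⟩ := by
  have hmaj := h.2.2.2.2.2.2 m (Nat.le_mul_of_pos_left m hm)
  have hm' : (m : ℝ) ≠ 0 := by positivity
  simpa [sum_range_dilation_of_le ω hm le_rfl, sum_range, h.2.2.2.1, hm'] using hmaj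

end FeasiblePair

theorem catalyst_base_case_general (m : ℕ) (h0 : 0 < m)
    (ω ω' : Fin m → ℝ) (h : FeasiblePair m m ω ω') :
    ω ⟨0, h0⟩ = 1 ∧ (∀ i : Fin m, 1 ≤ i.val → ω i = 0) ∧
      (∀ i : Fin m, ω' i = 1 / m) ∧
      (1 / 2) * ∑ i, |ω i - ω' i| = 1 - 1 / m := by
  obtain ⟨hω, -, hsum, hsum', -, hmono', -⟩ := id h
  have hhead : ω ⟨0, h0⟩ = 1 :=
    le_antisymm (hsum ▸ single_le_sum (fun i _ => hω i) (mem_univ _)) (h.one_le_head h0)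
  have htail : ∀ i ≠ ⟨0, h0⟩, ω i = 0 := fun i hi =>
    eq_zero_of_sum_eq_one_of_apply_eq_one hω hsum hhead hi
  have huniform : ∀ i, ω' i = 1 / m := by
    refine eq_of_le_of_sum_eq_card_mul (fun i => ?_) (by simp [hsum', h0.ne'])
    calc ω' i ≤ ω' ⟨0, h0⟩ := hmono' _ _ (Nat.zero_le _)
      _ ≤ ω ⟨0, h0⟩ / m := h.head_le_head_div h0 h0
      _ = 1 / m := by rw [hhead]
  refine ⟨hhead, fun i hi => htail i (by rintro rfl; simp at hi), huniform, ?_⟩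
  have hinv : (1 / m : ℝ) ≤ 1 := div_le_one_of_le₀ (by exact_mod_cast h0) (by positivity)
  simp only [huniform, sum_abs_sub_const_of_eq_one_of_eq_zero hhead htail, Fintype.card_fin,
    abs_of_nonneg (sub_nonneg.mpr hinv), abs_of_nonneg (by positivity : (0 : ℝ) ≤ 1 / m)]
  field_simp
  ring

/-- Base case `n = m`: any feasible catalyst pair in dimension `m` must have
`ω = (1, 0, …, 0)`, `ω' = (1/m, …, 1/m)`, and hence trace distance `1 − 1/m`. -/
theorem catalyst_base_case (m : ℕ) (hm : 2 ≤ m) (h0 : 0 < m)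
    (ω ω' : Fin m → ℝ) (h : FeasiblePair m m ω ω') :
    ω ⟨0, h0⟩ = 1 ∧ (∀ i : Fin m, 1 ≤ i.val → ω i = 0) ∧
      (∀ i : Fin m, ω' i = 1 / m) ∧
      (1 / 2) * ∑ i, |ω i - ω' i| = 1 - 1 / m :=
  catalyst_base_case_general m h0 ω ω' h
end

section
/- Let m ≥ 2 be an integer, let n be a multiple of m, and let (ω, ω') be a feasible catalyst pair of nonincreasing probability vectors in ℝ^n. Define ω̃ ∈ ℝ^n by ω̃_i = ω'_i if ω_i > ω'_i and ω̃_i = ω_i otherwise, for 2 ≤ i ≤ n, and ω̃_1 = 1 − ∑_{i=2}^n ω̃_i. Then ω̃ is a probability vector with nonincreasing entries, the pair (ω̃, ω') is again a feasible catalyst pair, and d(ω̃, ω') = d(ω, ω'). -/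
/-! Off the first entry, `ω̃ = min ω ω'` only lowers `ω`, and the lost mass is put on the first
entry. So the difference of the vectors listing each `ω̃ᵢ / m`, resp. `ωᵢ / m`, `m` times is
nonnegative on the first block of `m` entries, nonpositive afterwards, and sums to zero: its
partial sums are nonnegative, and majorization of `ω' ⊗ |0⟩⟨0|` survives. For the trace distance,
`|a - b| = a + b - 2 min a b`, and `min ω̃ᵢ ω'ᵢ = min ωᵢ ω'ᵢ` for every `i`: off the first entry
trivially, on it because `ω'₁ ≤ ω₁ ≤ ω̃₁`, the first inequality being majorization at `k = 1`. -/

open Finset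

theorem sum_range_comp_div_mul {M : Type*} [AddCommMonoid M] (F : ℕ → M) (m N : ℕ) :
    ∑ l ∈ range (N * m), F (l / m) = ∑ i ∈ range N, m • F i := by
  induction N with
  | zero => simp
  | succ N ih =>
    have hblock : ∑ x ∈ range m, F ((N * m + x) / m) = m • F N :=
      calc ∑ x ∈ range m, F ((N * m + x) / m) = ∑ x ∈ range m, F N :=
          sum_congr rfl fun x hx => by
            rw [mem_range] at hx
            rw [Nat.div_eq_of_lt_le (by rw [Nat.mul_comm]; omega) (by rw [Nat.succ_mul]; omega)]
        _ = m • F N := by rw [sum_const, card_range]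
    rw [Nat.succ_mul, sum_range_add, ih, hblock, sum_range_succ]

section OrderedGroup

variable {M : Type*} [AddCommGroup M] [PartialOrder M] [IsOrderedAddMonoid M]

theorem sum_range_nonneg_of_nonneg_of_nonpos {g : ℕ → M} {p N k : ℕ}
    (hhead : ∀ l < p, 0 ≤ g l) (htail : ∀ l, p ≤ l → l < N → g l ≤ 0)
    (htot : 0 ≤ ∑ l ∈ range N, g l) (hk : k ≤ N) : 0 ≤ ∑ l ∈ range k, g l := by
  rcases le_or_gt k p with hkp | hpk
  · exact sum_nonneg fun l hl => hhead l ((mem_range.1 hl).trans_le hkp)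
  · have hrest : ∑ l ∈ Ico k N, g l ≤ 0 := sum_nonpos fun l hl => by
      rw [mem_Ico] at hl
      exact htail l (hpk.le.trans hl.1) hl.2
    calc 0 ≤ ∑ l ∈ range N, g l := htot
      _ = ∑ l ∈ range k, g l + ∑ l ∈ Ico k N, g l := (sum_range_add_sum_Ico g hk).symm
      _ ≤ ∑ l ∈ range k, g l := add_le_of_nonpos_right hrest

theorem sum_range_comp_div_nonneg {F : ℕ → M} {m N k : ℕ} (hF0 : 0 ≤ F 0)
    (hF : ∀ i, i ≠ 0 → F i ≤ 0) (htot : 0 ≤ ∑ i ∈ range N, F i) (hk : k ≤ N * m) :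
    0 ≤ ∑ l ∈ range k, F (l / m) := by
  refine sum_range_nonneg_of_nonneg_of_nonpos (p := m) (fun l hl => ?_) (fun l hml hl => ?_)
    ?_ hk
  · rwa [Nat.div_eq_of_lt hl]
  · have hm : 0 < m := Nat.pos_of_ne_zero (by rintro rfl; simp at hl)
    exact hF _ (Nat.div_pos hml hm).ne'
  · rw [sum_range_comp_div_mul, sum_nsmul]
    exact nsmul_nonneg htot m

theorem le_apply_of_sum_eq_of_forall_ne_le {ι : Type*} [Fintype ι] {f g : ι → M} {a : ι}
    (hsum : ∑ i, f i = ∑ i, g i) (hle : ∀ i, i ≠ a → f i ≤ g i) : g a ≤ f a := by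
  classical
  have hrest : ∑ i ∈ univ.erase a, f i ≤ ∑ i ∈ univ.erase a, g i :=
    sum_le_sum fun i hi => hle i (ne_of_mem_erase hi)
  rw [← add_sum_erase univ f (mem_univ a), ← add_sum_erase univ g (mem_univ a)] at hsum
  refine (add_le_add_iff_right (∑ i ∈ univ.erase a, f i)).1 ?_
  calc g a + ∑ i ∈ univ.erase a, f i ≤ g a + ∑ i ∈ univ.erase a, g i := by gcongr
    _ = f a + ∑ i ∈ univ.erase a, f i := hsum.symm

end OrderedGroup

theorem sum_abs_sub_eq_of_min_eq {ι M : Type*} [Fintype ι] [AddCommGroup M] [LinearOrder M]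
    [IsOrderedAddMonoid M] {f g h : ι → M} (hsum : ∑ i, f i = ∑ i, g i)
    (hmin : ∀ i, min (f i) (h i) = min (g i) (h i)) :
    ∑ i, |f i - h i| = ∑ i, |g i - h i| := by
  have habs : ∀ a b : M, |a - b| = a + b - min a b - min a b := fun a b => by
    rw [← max_sub_min_eq_abs', ← min_add_max a b]; abel
  simp only [habs, sum_sub_distrib, sum_add_distrib, hsum, hmin]

theorem antitone_of_eq_min_of_ne_bot {ι α : Type*} [PartialOrder ι] [LinearOrder α]
    {f g h : ι → α} {a : ι} (ha : IsBot a) (hg : Antitone g) (hh : Antitone h)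
    (hf : ∀ i, i ≠ a → f i = min (g i) (h i)) (hfa : g a ≤ f a) : Antitone f := by
  intro i j hij
  by_cases hja : j = a
  · subst hja
    rw [le_antisymm hij (ha i)]
  rw [hf j hja]
  by_cases hia : i = a
  · subst hia
    exact (min_le_left _ _).trans ((hg hij).trans hfa)
  · rw [hf i hia]
    exact min_le_min (hg hij) (hh hij)

theorem sum_range_spread_le_of_forall_ne_zero_le {m n : ℕ} (h0 : 0 < n) {v w : Fin n → ℝ}
    (hrest : ∀ i, i ≠ ⟨0, h0⟩ → w i ≤ v i) (hsum : ∑ i, w i = ∑ i, v i) {k : ℕ}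
    (hk : k ≤ n * m) :
    (∑ l ∈ range k, if h : l / m < n then v ⟨l / m, h⟩ / m else 0) ≤
      ∑ l ∈ range k, if h : l / m < n then w ⟨l / m, h⟩ / m else 0 := by
  set F : ℕ → ℝ := fun i => if h : i < n then (w ⟨i, h⟩ - v ⟨i, h⟩) / m else 0 with hF
  have hF0 : 0 ≤ F 0 := by
    simp only [hF, dif_pos h0]
    exact div_nonneg (sub_nonneg.2 (le_apply_of_sum_eq_of_forall_ne_le hsum hrest))
      m.cast_nonneg
  have hFrest : ∀ i, i ≠ 0 → F i ≤ 0 := fun i hi => by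
    simp only [hF]
    split_ifs with hin
    · exact div_nonpos_of_nonpos_of_nonneg
        (sub_nonpos.2 (hrest _ (by simpa [Fin.ext_iff] using hi))) m.cast_nonneg
    · exact le_rfl
  have htot : ∑ i ∈ range n, F i = 0 := by
    rw [← Fin.sum_univ_eq_sum_range]
    simp only [hF, Fin.is_lt, dif_pos, Fin.eta, ← sum_div, sum_sub_distrib, hsum, sub_self,
      zero_div]
  rw [← sub_nonneg, ← sum_sub_distrib]
  refine (sum_range_comp_div_nonneg hF0 hFrest htot.ge hk).trans_eq (sum_congr rfl fun l _ => ?_)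
  simp only [hF]
  split_ifs <;> ring

theorem FeasiblePair.apply_zero_le {m n : ℕ} (hm : 0 < m) (h0 : 0 < n) {ω ω' : Fin n → ℝ}
    (h : FeasiblePair m n ω ω') : ω' ⟨0, h0⟩ ≤ ω ⟨0, h0⟩ := by
  have h1 := h.2.2.2.2.2.2 1 (Nat.one_le_iff_ne_zero.2 (by positivity))
  simp only [sum_range_one, Nat.zero_div, dif_pos h0] at h1
  exact h1.trans (div_le_self (h.1 _) (by exact_mod_cast hm))

theorem catalyst_pile_on_first_general (m n : ℕ) (hm : 2 ≤ m) (h0 : 0 < n)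
    (ω ω' ωt : Fin n → ℝ) (h : FeasiblePair m n ω ω')
    (hωt : ∀ i : Fin n, 1 ≤ i.val → ωt i = if ω' i < ω i then ω' i else ω i)
    (hωt1 : ωt ⟨0, h0⟩ =
      1 - ∑ i ∈ Finset.univ.filter (fun i : Fin n => 1 ≤ i.val), ωt i) :
    FeasiblePair m n ωt ω' ∧
      (1 / 2) * ∑ i, |ωt i - ω' i| = (1 / 2) * ∑ i, |ω i - ω' i| := by
  set e : Fin n := ⟨0, h0⟩
  have hω'first : ω' e ≤ ω e := h.apply_zero_le (by omega) h0
  obtain ⟨hω0, hω'0, hωs, hω's, hωmono, hω'mono, hmaj⟩ := h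
  have hne : ∀ i : Fin n, 1 ≤ i.val ↔ i ≠ e := fun i => by
    rw [Ne, Fin.ext_iff, show (e : ℕ) = 0 from rfl]; omega
  have hmin : ∀ i, i ≠ e → ωt i = min (ω i) (ω' i) := fun i hi => by
    rw [hωt i ((hne i).2 hi), min_comm, min_def]
    split_ifs <;> first | rfl | linarith
  have hsum : ∑ i, ωt i = ∑ i, ω i := by
    rw [hωs, ← add_sum_erase univ ωt (mem_univ e), hωt1, ← filter_ne', filter_congr
      fun i _ => hne i]
    ring
  have hrest : ∀ i, i ≠ e → ωt i ≤ ω i := fun i hi => (hmin i hi).trans_le (min_le_left _ _)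
  have hfirst : ω e ≤ ωt e := le_apply_of_sum_eq_of_forall_ne_le hsum hrest
  have hminω' : ∀ i, min (ωt i) (ω' i) = min (ω i) (ω' i) := fun i => by
    by_cases hi : i = e
    · subst hi
      rw [min_eq_right (hω'first.trans hfirst), min_eq_right hω'first]
    · rw [hmin i hi, min_assoc, min_self]
  refine ⟨⟨fun i => ?_, hω'0, hsum.trans hωs, hω's, fun i j hij => ?_, hω'mono,
    fun k hk => (hmaj k hk).trans (sum_range_spread_le_of_forall_ne_zero_le h0 hrest hsum hk)⟩, ?_⟩
  · by_cases hi : i = e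
    · exact hi ▸ (hω0 e).trans hfirst
    · exact (hmin i hi).symm ▸ le_min (hω0 i) (hω'0 i)
  · exact antitone_of_eq_min_of_ne_bot (fun i => Nat.zero_le i.val) (fun i j => hωmono i j)
      (fun i j => hω'mono i j) hmin hfirst hij
  · rw [sum_abs_sub_eq_of_min_eq hsum hminω']

/-- Piling the majorization advantage on the first entry: replacing `ω` by `ω̃`,
where `ω̃_i = min(ω_i, ω'_i)` for `i ≥ 2` (i.e. `ω̃_i = ω'_i` if `ω_i > ω'_i`
and `ω̃_i = ω_i` otherwise) and `ω̃_1 = 1 − ∑_{i≥2} ω̃_i`, yields again a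
feasible catalyst pair `(ω̃, ω')`, with unchanged trace distance. -/
theorem catalyst_pile_on_first (m n : ℕ) (hm : 2 ≤ m) (h0 : 0 < n) (hmn : m ∣ n)
    (ω ω' ωt : Fin n → ℝ) (h : FeasiblePair m n ω ω')
    (hωt : ∀ i : Fin n, 1 ≤ i.val → ωt i = if ω' i < ω i then ω' i else ω i)
    (hωt1 : ωt ⟨0, h0⟩ =
      1 - ∑ i ∈ Finset.univ.filter (fun i : Fin n => 1 ≤ i.val), ωt i) :
    FeasiblePair m n ωt ω' ∧
      (1 / 2) * ∑ i, |ωt i - ω' i| = (1 / 2) * ∑ i, |ω i - ω' i| :=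
  catalyst_pile_on_first_general m n hm h0 ω ω' ωt h hωt hωt1
end

section
/- Let β > 0, let E^S : Fin m → ℝ (with m ≥ 1) be the system energy levels with maximum E^S_max and partition function Z_S = ∑_{i} e^{−β·E^S_i}, and let E^C : Fin n → ℝ (with n ≥ 1) be the catalyst energy levels with maximum E^C_max, partition function Z_C = ∑_{j} e^{−β·E^C_j}, and thermal probabilities τ_j = e^{−β·E^C_j}/Z_C. Let r : Fin n → ℝ satisfy 0 < r_j ≤ 1 for all j and ∑_j r_j = 1, and let ε̂ ≥ 0 satisfy max_i (r_i + ε̂)/τ_i ≥ (Z_S·e^{β·E^S_max})·max_j (r_j/τ_j). Then ε̂ ≥ (Z_S·e^{β·E^S_max} − 1)·e^{−β·E^C_max}/Z_C. -/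
/-!
Write `K = Z_S e^{β E^S_max}` and `M = max_j r_j / τ_j`. Since `r` and `τ` are both
probability vectors, `M ≥ 1`; and `K ≥ 1` because the term of `Z_S` at a maximal level
is `e^{-β E^S_max}`. Every `τ_j` is at least `τ_min = e^{-β E^C_max} / Z_C`, so
`max_j (r_j + ε) / τ_j ≤ M + ε / τ_min`. The hypothesis then gives `K M ≤ M + ε / τ_min`,
hence `K - 1 ≤ (K - 1) M ≤ ε / τ_min`.
-/

open Finset

namespace Finset

variable {ι : Type*} {s : Finset ι}

theorem one_le_sup'_div_of_sum_le {p q : ι → ℝ} (hs : s.Nonempty) (hq : ∀ j ∈ s, 0 < q j)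
    (hsum : ∑ j ∈ s, q j ≤ ∑ j ∈ s, p j) : 1 ≤ s.sup' hs (fun j => p j / q j) := by
  set M := s.sup' hs (fun j => p j / q j)
  have hp_le : ∀ j ∈ s, p j ≤ M * q j := fun j hj =>
    (div_le_iff₀ (hq j hj)).mp (le_sup' (fun j => p j / q j) hj)
  have hq_pos : 0 < ∑ j ∈ s, q j := sum_pos hq hs
  have : ∑ j ∈ s, q j ≤ M * ∑ j ∈ s, q j := calc
    ∑ j ∈ s, q j ≤ ∑ j ∈ s, p j := hsum
    _ ≤ ∑ j ∈ s, M * q j := sum_le_sum hp_le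
    _ = M * ∑ j ∈ s, q j := (mul_sum s q M).symm
  nlinarith

theorem sup'_add_div_le {p q : ι → ℝ} {ε c : ℝ} (hs : s.Nonempty) (hε : 0 ≤ ε) (hc : 0 < c)
    (hq : ∀ j ∈ s, c ≤ q j) :
    s.sup' hs (fun j => (p j + ε) / q j) ≤ s.sup' hs (fun j => p j / q j) + ε / c :=
  sup'_le hs _ fun j hj => calc
    (p j + ε) / q j = p j / q j + ε / q j := add_div _ _ _
    _ ≤ s.sup' hs (fun j => p j / q j) + ε / c :=
      add_le_add (le_sup' (fun j => p j / q j) hj) (div_le_div_of_nonneg_left hε hc (hq j hj))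

end Finset

section Gibbs

variable {ι : Type*} [Fintype ι] (β : ℝ) (E : ι → ℝ)

noncomputable def partitionFunction : ℝ := ∑ i, Real.exp (-β * E i)

noncomputable def gibbs (j : ι) : ℝ := Real.exp (-β * E j) / partitionFunction β E

variable {β E}

theorem partitionFunction_pos [Nonempty ι] : 0 < partitionFunction β E :=
  sum_pos (fun _ _ => Real.exp_pos _) univ_nonempty

theorem gibbs_pos [Nonempty ι] (j : ι) : 0 < gibbs β E j :=
  div_pos (Real.exp_pos _) partitionFunction_pos

theorem sum_gibbs [Nonempty ι] : ∑ j, gibbs β E j = 1 := by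
  unfold gibbs
  rw [← sum_div]
  exact div_self partitionFunction_pos.ne'

theorem gibbs_le_gibbs (hβ : 0 ≤ β) {j k : ι} (h : E j ≤ E k) : gibbs β E k ≤ gibbs β E j := by
  refine div_le_div_of_nonneg_right ?_ (sum_nonneg fun _ _ => (Real.exp_pos _).le)
  exact Real.exp_le_exp.mpr (mul_le_mul_of_nonpos_left h (neg_nonpos.mpr hβ))

theorem one_le_partitionFunction_mul_exp {Emax : ℝ} (h : Emax ∈ Set.range E) :
    1 ≤ partitionFunction β E * Real.exp (β * Emax) := by
  obtain ⟨i, rfl⟩ := h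
  calc 1 = Real.exp (-β * E i) * Real.exp (β * E i) := by rw [← Real.exp_add]; simp
    _ ≤ partitionFunction β E * Real.exp (β * E i) := by
      gcongr
      exact single_le_sum (f := fun i => Real.exp (-β * E i)) (fun i _ => (Real.exp_pos _).le)
        (mem_univ i)

end Gibbs

theorem embezzling_error_bounded_dimension_general
    (β : ℝ) (hβ : 0 < β) (m n : ℕ) (hn : 0 < n)
    (ES : Fin m → ℝ) (EC : Fin n → ℝ) (ESmax ECmax : ℝ)
    (hESmax : IsGreatest (Set.range ES) ESmax)
    (hECmax : IsGreatest (Set.range EC) ECmax)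
    (ZS ZC : ℝ)
    (hZS : ZS = ∑ i, Real.exp (-β * ES i))
    (hZC : ZC = ∑ j, Real.exp (-β * EC j))
    (τ : Fin n → ℝ) (hτ : ∀ j, τ j = Real.exp (-β * EC j) / ZC)
    (r : Fin n → ℝ) (hrsum : ∑ j, r j = 1)
    (ε : ℝ) (hε : 0 ≤ ε)
    (hmax :
      ZS * Real.exp (β * ESmax) *
          Finset.univ.sup' (Finset.univ_nonempty_iff.mpr (Fin.pos_iff_nonempty.mp hn))
            (fun j => r j / τ j) ≤
        Finset.univ.sup' (Finset.univ_nonempty_iff.mpr (Fin.pos_iff_nonempty.mp hn))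
          (fun i => (r i + ε) / τ i)) :
    (ZS * Real.exp (β * ESmax) - 1) * Real.exp (-β * ECmax) / ZC ≤ ε := by
  obtain ⟨jmax, hjmax⟩ := hECmax.1
  have : Nonempty (Fin n) := ⟨jmax⟩
  obtain rfl : τ = gibbs β EC := funext fun j => by rw [hτ, hZC]; rfl
  have hK : 1 ≤ ZS * Real.exp (β * ESmax) := hZS ▸ one_le_partitionFunction_mul_exp hESmax.1
  have hM := one_le_sup'_div_of_sum_le (p := r) (q := gibbs β EC) univ_nonempty
    (fun j _ => gibbs_pos j) (by rw [sum_gibbs, hrsum])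
  have hub := sup'_add_div_le (p := r) univ_nonempty hε (gibbs_pos jmax)
    fun j _ => gibbs_le_gibbs hβ.le (hjmax ▸ hECmax.2 ⟨j, rfl⟩)
  have hbound : ZS * Real.exp (β * ESmax) - 1 ≤ ε / gibbs β EC jmax := by nlinarith
  rw [le_div_iff₀ (gibbs_pos jmax)] at hbound
  rwa [mul_div_assoc, hZC, ← hjmax]

/-- Bounded-dimension lower bound on the thermal embezzling error, forced by
monotonicity of the max-relative entropy `D_∞`. Given inverse temperature
`β > 0`, finite system energy levels `ES : Fin m → ℝ` with maximum `ESmax` and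
partition function `ZS = ∑ e^{−β·ES i}`, and finite catalyst energy levels
`EC : Fin n → ℝ` with maximum `ECmax`, partition function `ZC` and Gibbs
probabilities `τ j = e^{−β·EC j}/ZC`: any probability distribution `r` with
`0 < r j ≤ 1` and any `ε̂ ≥ 0` with
`max_i (r i + ε̂)/τ i ≥ (ZS·e^{β·ESmax})·max_j r j/τ j` must satisfy
`ε̂ ≥ (ZS·e^{β·ESmax} − 1)·e^{−β·ECmax}/ZC`. -/
theorem embezzling_error_bounded_dimension
    (β : ℝ) (hβ : 0 < β) (m n : ℕ) (hm : 0 < m) (hn : 0 < n)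
    (ES : Fin m → ℝ) (EC : Fin n → ℝ) (ESmax ECmax : ℝ)
    (hESmax : IsGreatest (Set.range ES) ESmax)
    (hECmax : IsGreatest (Set.range EC) ECmax)
    (ZS ZC : ℝ)
    (hZS : ZS = ∑ i, Real.exp (-β * ES i))
    (hZC : ZC = ∑ j, Real.exp (-β * EC j))
    (τ : Fin n → ℝ) (hτ : ∀ j, τ j = Real.exp (-β * EC j) / ZC)
    (r : Fin n → ℝ) (hr : ∀ j, 0 < r j ∧ r j ≤ 1) (hrsum : ∑ j, r j = 1)
    (ε : ℝ) (hε : 0 ≤ ε)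
    (hmax :
      ZS * Real.exp (β * ESmax) *
          Finset.univ.sup' (Finset.univ_nonempty_iff.mpr (Fin.pos_iff_nonempty.mp hn))
            (fun j => r j / τ j) ≤
        Finset.univ.sup' (Finset.univ_nonempty_iff.mpr (Fin.pos_iff_nonempty.mp hn))
          (fun i => (r i + ε) / τ i)) :
    (ZS * Real.exp (β * ESmax) - 1) * Real.exp (-β * ECmax) / ZC ≤ ε :=
  embezzling_error_bounded_dimension_general β hβ m n hn ES EC ESmax ECmax hESmax hECmax ZS ZC hZS
    hZC τ hτ r hrsum ε hε hmax
end

section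
/- Let E : ℕ → ℝ be a nondecreasing sequence of nonnegative energy values with E_j → ∞ as j → ∞, and let γ ∈ (0,1). Let ω : ℕ → ℝ be nonnegative with ∑_i ω_i = 1 (the sum converging), and suppose the series ∑_i ω_i·E_i converges with ∑_i ω_i·E_i ≤ Ē for some finite Ē ≥ 0. -/
/-!
Markov's inequality in weighted form: the mass `ω` puts on `{i | E i ≥ E (j(W)+1)}` is at most
`Ē / E (j(W)+1) < 1 - W`, so mass at least `W` sits on indices `i ≤ j(W)`, where `γ ^ E i ≥ γ ^ E j(W)`.
Summing the pointwise bound `m (1 - x / c) ≤ g`, valid whenever `x < c` forces `m ≤ g`, against `ω`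
gives both steps at once, without splitting the series.
-/

theorem mul_one_sub_div_le_of_lt_imp_le {m c x g : ℝ} (hm : 0 ≤ m) (hc : 0 < c) (hx : 0 ≤ x)
    (hg : 0 ≤ g) (h : x < c → m ≤ g) : m * (1 - x / c) ≤ g := by
  rcases lt_or_ge x c with hxc | hcx
  · calc m * (1 - x / c) ≤ m * 1 := by gcongr; linarith [div_nonneg hx hc.le]
      _ ≤ g := by simpa using h hxc
  · have : 1 - x / c ≤ 0 := by rw [sub_nonpos, one_le_div hc]; exact hcx
    exact (mul_nonpos_of_nonneg_of_nonpos hm this).trans hg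

theorem mul_one_sub_tsum_div_le_tsum {ι : Type*} {ω x g : ι → ℝ} {m c : ℝ} (hm : 0 ≤ m)
    (hc : 0 < c) (hω : ∀ i, 0 ≤ ω i) (hx : ∀ i, 0 ≤ x i) (hg : ∀ i, 0 ≤ g i)
    (hωs : Summable ω) (hωsum : ∑' i, ω i = 1) (hxs : Summable fun i => ω i * x i)
    (hgs : Summable fun i => ω i * g i) (h : ∀ i, x i < c → m ≤ g i) :
    m * (1 - (∑' i, ω i * x i) / c) ≤ ∑' i, ω i * g i := by
  have hrw : (fun i => ω i * (m * (1 - x i / c))) = fun i => m * (ω i - ω i * x i / c) := by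
    ext i; ring
  have hmarkov : ∑' i, ω i * (m * (1 - x i / c)) = m * (1 - (∑' i, ω i * x i) / c) := by
    rw [hrw, tsum_mul_left, hωs.tsum_sub (hxs.div_const c), hωsum, tsum_div_const]
  rw [← hmarkov]
  refine Summable.tsum_le_tsum (fun i => ?_) ?_ hgs
  · exact mul_le_mul_of_nonneg_left
      (mul_one_sub_div_le_of_lt_imp_le hm hc (hx i) (hg i) (h i)) (hω i)
  · rw [hrw]
    exact ((hωs.sub (hxs.div_const c)).mul_left m)

theorem gibbs_weighted_sum_lower_bound_general
    (E : ℕ → ℝ) (hmono : Monotone E) (hpos : ∀ j, 0 ≤ E j)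
    (γ : ℝ) (hγ0 : 0 < γ) (hγ1 : γ < 1)
    (ω : ℕ → ℝ) (hω : ∀ i, 0 ≤ ω i) (hωsummable : Summable ω)
    (hωsum : ∑' i, ω i = 1)
    (Ebar : ℝ) (hEbar : 0 ≤ Ebar)
    (hEsummable : Summable (fun i => ω i * E i))
    (hE : ∑' i, ω i * E i ≤ Ebar)
    (W : ℝ) (hW1 : W < 1)
    (jW : ℕ) (hjW : IsLeast {j : ℕ | Ebar / (1 - W) < E (j + 1)} jW) :
    W * γ ^ (E jW) ≤ ∑' i, ω i * γ ^ (E i) := by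
  have hW : 0 < 1 - W := by linarith
  have hthreshold : Ebar < E (jW + 1) * (1 - W) := (div_lt_iff₀ hW).mp hjW.1
  have hc : 0 < E (jW + 1) := (div_nonneg hEbar hW.le).trans_lt hjW.1
  have hγpow : ∀ i, 0 ≤ γ ^ E i := fun i => Real.rpow_nonneg hγ0.le _
  have hgibbs_summable : Summable fun i => ω i * γ ^ E i :=
    hωsummable.of_nonneg_of_le (fun i => mul_nonneg (hω i) (hγpow i)) fun i =>
      mul_le_of_le_one_right (hω i) (Real.rpow_le_one hγ0.le hγ1.le (hpos i))
  have hlow : ∀ i, E i < E (jW + 1) → γ ^ E jW ≤ γ ^ E i := fun i hi =>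
    Real.rpow_le_rpow_of_exponent_ge hγ0 hγ1.le
      (hmono (Nat.lt_succ_iff.mp (hmono.reflect_lt hi)))
  calc W * γ ^ E jW ≤ γ ^ E jW * (1 - Ebar / E (jW + 1)) := by
        rw [mul_comm]
        gcongr
        rw [le_sub_comm, div_le_iff₀ hc]
        linarith
    _ ≤ γ ^ E jW * (1 - (∑' i, ω i * E i) / E (jW + 1)) := by
        gcongr
    _ ≤ ∑' i, ω i * γ ^ E i :=
        mul_one_sub_tsum_div_le_tsum (hγpow jW) hc hω hpos hγpow hωsummable hωsum hEsummable
          hgibbs_summable hlow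

/-- Lower bound on the Gibbs-weighted sum from an energy constraint. Let
`E : ℕ → ℝ` be nondecreasing, nonnegative and unbounded, let `γ ∈ (0,1)`, and
let `ω` be a probability distribution on `ℕ` whose mean energy
`∑' i, ω i * E i` is at most `Ē`. Then for every `0 < W < 1`, with `j(W)` the
least index `j` such that `E (j+1) > Ē/(1−W)`, one has
`∑' i, ω i * γ^(E i) ≥ W · γ^(E j(W))` (real exponents). -/
theorem gibbs_weighted_sum_lower_bound
    (E : ℕ → ℝ) (hmono : Monotone E) (hpos : ∀ j, 0 ≤ E j)
    (htop : Filter.Tendsto E Filter.atTop Filter.atTop)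
    (γ : ℝ) (hγ0 : 0 < γ) (hγ1 : γ < 1)
    (ω : ℕ → ℝ) (hω : ∀ i, 0 ≤ ω i) (hωsummable : Summable ω)
    (hωsum : ∑' i, ω i = 1)
    (Ebar : ℝ) (hEbar : 0 ≤ Ebar)
    (hEsummable : Summable (fun i => ω i * E i))
    (hE : ∑' i, ω i * E i ≤ Ebar)
    (W : ℝ) (hW0 : 0 < W) (hW1 : W < 1)
    (jW : ℕ) (hjW : IsLeast {j : ℕ | Ebar / (1 - W) < E (j + 1)} jW) :
    W * γ ^ (E jW) ≤ ∑' i, ω i * γ ^ (E i) :=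
  gibbs_weighted_sum_lower_bound_general E hmono hpos γ hγ0 hγ1 ω hω hωsummable hωsum Ebar hEbar
    hEsummable hE W hW1 jW hjW
end

section
/- For all real numbers x, y with 0 ≤ x ≤ 1 and 0 ≤ y ≤ 1, and every real a ≥ 2, one has √x − √a·√y ≤ √|x − y| − f(a)·y, where f(a) = (1/2)·a²/(a² + 1). -/
/-! Subadditivity of `√` gives `√x ≤ √|x - y| + √y`, so it suffices that
`f(a) · y ≤ (√a - 1) · √y`. This follows from `y ≤ √y` on `[0, 1]` and `f(a) ≤ √a - 1`
for `a ≥ 2`; the latter is nearly tight at `a = 2`, where the two sides are `0.4` and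
`√2 - 1 ≈ 0.414`. -/

namespace Real

theorem sqrt_add_le_sqrt_add_sqrt {u v : ℝ} (hu : 0 ≤ u) (hv : 0 ≤ v) :
    √(u + v) ≤ √u + √v := by
  rw [sqrt_le_iff]
  refine ⟨by positivity, ?_⟩
  nlinarith [sq_sqrt hu, sq_sqrt hv, mul_nonneg (sqrt_nonneg u) (sqrt_nonneg v)]

theorem sqrt_le_sqrt_abs_sub_add_sqrt (x : ℝ) {y : ℝ} (hy : 0 ≤ y) :
    √x ≤ √|x - y| + √y :=
  calc √x ≤ √(|x - y| + y) := sqrt_le_sqrt (by linarith [le_abs_self (x - y)])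
    _ ≤ √|x - y| + √y := sqrt_add_le_sqrt_add_sqrt (abs_nonneg _) hy

end Real

theorem one_half_mul_sq_div_sq_add_one_le_sqrt_sub_one {a : ℝ} (ha : 2 ≤ a) :
    1 / 2 * (a ^ 2 / (a ^ 2 + 1)) ≤ √a - 1 := by
  obtain ⟨s, hs0, rfl⟩ : ∃ s, 0 ≤ s ∧ a = s ^ 2 :=
    ⟨√a, Real.sqrt_nonneg a, (Real.sq_sqrt (by linarith)).symm⟩
  rw [Real.sqrt_sq hs0, ← mul_div_assoc, div_le_iff₀ (by positivity)]
  nlinarith [sq_nonneg (s - 1), mul_nonneg hs0 (sq_nonneg (s ^ 2 - 2))]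

theorem splitting_inequality_general (x y a : ℝ)
    (hy0 : 0 ≤ y) (hy1 : y ≤ 1) (ha : 2 ≤ a) :
    Real.sqrt x - Real.sqrt a * Real.sqrt y ≤
      Real.sqrt |x - y| - (1 / 2 * (a ^ 2 / (a ^ 2 + 1))) * y := by
  have hf := one_half_mul_sq_div_sq_add_one_le_sqrt_sub_one ha
  have hweight : 1 / 2 * (a ^ 2 / (a ^ 2 + 1)) * y ≤ (√a - 1) * √y := by
    have hf0 : 0 ≤ 1 / 2 * (a ^ 2 / (a ^ 2 + 1)) := by positivity
    exact mul_le_mul hf (Real.le_sqrt_self_iff.2 hy1) hy0 (hf0.trans hf)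
  calc √x - √a * √y ≤ √|x - y| + √y - √a * √y := by
        gcongr; exact Real.sqrt_le_sqrt_abs_sub_add_sqrt x hy0
    _ = √|x - y| - (√a - 1) * √y := by ring
    _ ≤ √|x - y| - 1 / 2 * (a ^ 2 / (a ^ 2 + 1)) * y := by linarith

/-- The splitting inequality: for `0 ≤ x, y ≤ 1` and `a ≥ 2`,
`√x − √a·√y ≤ √|x − y| − f(a)·y`, where `f(a) = (1/2)·a²/(a²+1)`. -/
theorem splitting_inequality (x y a : ℝ)
    (hx0 : 0 ≤ x) (hx1 : x ≤ 1) (hy0 : 0 ≤ y) (hy1 : y ≤ 1) (ha : 2 ≤ a) :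
    Real.sqrt x - Real.sqrt a * Real.sqrt y ≤
      Real.sqrt |x - y| - (1 / 2 * (a ^ 2 / (a ^ 2 + 1))) * y :=
  splitting_inequality_general x y a hy0 hy1 ha
end
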